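/- arXiv:2303.04775 — 2 statements merged into one kernel-verified Lean document; each statement's English description precedes it below -/
import Mathlib

section
/- For ν ∈ (0,1), the one-dimensional subspace spanned by w(x) = x^(ν/2) is invariant under the operator F[h] = k ∂/∂x ( h · ∂^ν h/∂x^ν ) − φ h; more precisely, for any scalar c, F[c·w] = −φ c · w. -/
/-!
The product `h · ∂^ν h` of `h = c x^(ν/2)` with its Caputo derivative is constant on `x > 0`:
the Caputo derivative of `x^β` is, by the substitution `s = z t` in its defining integral,
a multiple of `z^(β - ν)`, and for `β = ν/2` the exponents `β` and `β - ν` cancel.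
Hence the derivative term of `F` vanishes and only `-φ h` remains.
-/

open intervalIntegral

/-- Caputo fractional derivative of order `ν` with zero starting point. -/
noncomputable def caputo (ν : ℝ) (f : ℝ → ℝ) (z : ℝ) : ℝ :=
  (Real.Gamma (1 - ν))⁻¹ * ∫ s in (0:ℝ)..z, (z - s) ^ (-ν) * deriv f s

lemma integral_sub_rpow_mul_rpow_eq (a b : ℝ) {z : ℝ} (hz : 0 < z) :
    ∫ s in (0:ℝ)..z, (z - s) ^ a * s ^ b
      = z ^ (a + b + 1) * ∫ t in (0:ℝ)..1, (1 - t) ^ a * t ^ b := by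
  have hscale : ∫ s in (0:ℝ)..z, (z - s) ^ a * s ^ b
      = z * ∫ t in (0:ℝ)..1, (z - z * t) ^ a * (z * t) ^ b := by
    rw [integral_comp_mul_left (fun s => (z - s) ^ a * s ^ b) hz.ne', mul_zero, mul_one,
      smul_eq_mul, ← mul_assoc, mul_inv_cancel₀ hz.ne', one_mul]
  have hfactor : ∫ t in (0:ℝ)..1, (z - z * t) ^ a * (z * t) ^ b
      = (z ^ a * z ^ b) * ∫ t in (0:ℝ)..1, (1 - t) ^ a * t ^ b := by
    rw [← integral_const_mul]
    refine integral_congr fun t ht => ?_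
    rw [Set.uIcc_of_le zero_le_one] at ht
    rw [show z - z * t = z * (1 - t) by ring, Real.mul_rpow hz.le (by linarith [ht.2]),
      Real.mul_rpow hz.le ht.1]
    ring
  rw [hscale, hfactor, ← mul_assoc, Real.rpow_add hz, Real.rpow_add hz, Real.rpow_one]
  ring

lemma caputo_const_mul (ν c : ℝ) (f : ℝ → ℝ) (z : ℝ) :
    caputo ν (fun x => c * f x) z = c * caputo ν f z := by
  simp only [caputo, deriv_const_mul_field', mul_left_comm _ c, integral_const_mul]

lemma caputo_rpow (ν β : ℝ) {z : ℝ} (hz : 0 < z) :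
    caputo ν (fun x => x ^ β) z
      = (Real.Gamma (1 - ν))⁻¹ * β * (∫ t in (0:ℝ)..1, (1 - t) ^ (-ν) * t ^ (β - 1))
        * z ^ (β - ν) := by
  simp only [caputo, Real.deriv_rpow_const, mul_left_comm _ β, integral_const_mul]
  rw [integral_sub_rpow_mul_rpow_eq _ _ hz,
    show -ν + (β - 1) + 1 = β - ν by ring]
  ring

theorem invariant_subspace_one_dim_general (k φ ν : ℝ)
    (F : (ℝ → ℝ) → ℝ → ℝ)
    (hF : F = fun h x => k * deriv (fun ξ => h ξ * caputo ν h ξ) x - φ * h x)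
    (w : ℝ → ℝ) (hw : w = fun x => x ^ (ν / 2)) :
    ∀ c : ℝ, ∀ x > (0:ℝ), F (fun x => c * w x) x = -φ * c * w x := by
  intro c x hx
  subst hF hw
  set C := (Real.Gamma (1 - ν))⁻¹ * (ν / 2) *
    ∫ t in (0:ℝ)..1, (1 - t) ^ (-ν) * t ^ (ν / 2 - 1)
  have hprod_const : (fun ξ => c * ξ ^ (ν / 2) * caputo ν (fun x => c * x ^ (ν / 2)) ξ)
      =ᶠ[nhds x] fun _ => c ^ 2 * C := by
    filter_upwards [Ioi_mem_nhds hx] with z hz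
    rw [caputo_const_mul, caputo_rpow _ _ hz]
    have hcancel : z ^ (ν / 2) * z ^ (ν / 2 - ν) = 1 := by
      rw [← Real.rpow_add hz, show ν / 2 + (ν / 2 - ν) = 0 by ring, Real.rpow_zero]
    linear_combination c ^ 2 * C * hcancel
  simp only [hprod_const.deriv_eq, deriv_const]
  ring

theorem invariant_subspace_one_dim (k φ ν : ℝ) (hν : ν ∈ Set.Ioo (0:ℝ) 1)
    (F : (ℝ → ℝ) → ℝ → ℝ)
    (hF : F = fun h x => k * deriv (fun ξ => h ξ * caputo ν h ξ) x - φ * h x)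
    (w : ℝ → ℝ) (hw : w = fun x => x ^ (ν / 2)) :
    ∀ c : ℝ, ∀ x > (0:ℝ), F (fun x => c * w x) x = -φ * c * w x :=
  invariant_subspace_one_dim_general k φ ν F hF w hw
end

section
/- For γ ∈ (0,1) and φ > 0, the Mittag-Leffler function y(t) = E_γ(−φ t^γ) = Σ_{i≥0} (−φ t^γ)^i / Γ(γ i + 1) satisfies y(0) = 1 and the Caputo fractional differential equation d^γ y/dt^γ = −φ y for t > 0. -/
/-- One-parameter Mittag-Leffler function evaluated at `-φ * t ^ γ`. -/
noncomputable def mittagLeffler (γ φ t : ℝ) : ℝ :=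
  ∑' i : ℕ, (-φ * t ^ γ) ^ i / Real.Gamma (γ * i + 1)

open Real MeasureTheory Filter Topology Set

theorem Real.Gamma_add_one_sub_mul_rpow_le_Gamma_add_one {x γ : ℝ} (hx : 0 < x) (hγ0 : 0 < γ)
    (hγ1 : γ < 1) : Gamma (x + 1 - γ) * x ^ γ ≤ Gamma (x + 1) := by
  -- log-convexity between `x` and `x + 1`, which `x + 1 - γ` splits in the ratio `γ : 1 - γ`
  have hconv := Gamma_mul_add_mul_le_rpow_Gamma_mul_rpow_Gamma hx (by linarith : 0 < x + 1)
    hγ0 (sub_pos.2 hγ1) (add_sub_cancel γ 1)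
  rw [show γ * x + (1 - γ) * (x + 1) = x + 1 - γ by ring] at hconv
  have hrec : Gamma (x + 1) = x * Gamma x := Gamma_add_one hx.ne'
  calc Gamma (x + 1 - γ) * x ^ γ
      ≤ Gamma x ^ γ * Gamma (x + 1) ^ (1 - γ) * x ^ γ := by gcongr
    _ = (x * Gamma x) ^ γ * Gamma (x + 1) ^ (1 - γ) := by
        rw [mul_rpow hx.le (Gamma_pos_of_pos hx).le]; ring
    _ = Gamma (x + 1) := by
        rw [← hrec, ← rpow_add (Gamma_pos_of_pos (by linarith)), add_sub_cancel, rpow_one]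

theorem summable_pow_div_Gamma_mul_add_one {γ : ℝ} (hγ0 : 0 < γ) (hγ1 : γ < 1) (x : ℝ) :
    Summable fun n : ℕ => x ^ n / Gamma (γ * n + 1) := by
  have hΓ : ∀ n : ℕ, 0 < Gamma (γ * n + 1) := fun n => Gamma_pos_of_pos (by positivity)
  have hgrowth : ∀ᶠ n : ℕ in atTop, 2 * |x| ≤ (γ * (n + 1)) ^ γ :=
    ((tendsto_rpow_atTop hγ0).comp ((tendsto_natCast_atTop_atTop.atTop_add tendsto_const_nhds
      |>.const_mul_atTop hγ0))).eventually_ge_atTop _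
  refine summable_of_ratio_norm_eventually_le (r := 1 / 2) (by norm_num) ?_
  filter_upwards [hgrowth] with n hn
  have hgautschi := Gamma_add_one_sub_mul_rpow_le_Gamma_add_one
    (by positivity : 0 < γ * (n + 1)) hγ0 hγ1
  rw [show γ * (n + 1) + 1 - γ = γ * n + 1 by ring] at hgautschi
  rw [norm_div, norm_div, norm_pow, norm_pow, Real.norm_of_nonneg (hΓ _).le,
    Real.norm_of_nonneg (hΓ _).le, Real.norm_eq_abs, Nat.cast_succ,
    div_le_iff₀ (Gamma_pos_of_pos (by positivity)), pow_succ]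
  calc |x| ^ n * |x| ≤ 1 / 2 * |x| ^ n * (γ * (n + 1)) ^ γ := by
        nlinarith [pow_nonneg (abs_nonneg x) n]
    _ = 1 / 2 * (|x| ^ n / Gamma (γ * n + 1)) * (Gamma (γ * n + 1) * (γ * (n + 1)) ^ γ) := by
        field_simp [(hΓ n).ne']
    _ ≤ 1 / 2 * (|x| ^ n / Gamma (γ * n + 1)) * Gamma (γ * (n + 1) + 1) := by gcongr

theorem hasDerivAt_tsum_mul_pow {a : ℕ → ℝ} (ha : ∀ r, Summable fun n => |a n| * r ^ n) (u : ℝ) :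
    HasDerivAt (fun z => ∑' n, a n * z ^ n) (∑' n, a (n + 1) * (n + 1) * u ^ n) u := by
  set R := |u| + 1
  have hR : 1 ≤ R := le_add_of_nonneg_left (abs_nonneg u)
  have hu : u ∈ Metric.ball (0 : ℝ) R := by simp [R]
  have hbound : ∀ n y, y ∈ Metric.ball (0 : ℝ) R →
      ‖a n * (n * y ^ (n - 1))‖ ≤ |a n| * (2 * R) ^ n := by
    intro n y hy
    rw [mem_ball_zero_iff, Real.norm_eq_abs] at hy
    have hn : (n : ℝ) ≤ 2 ^ n := by exact_mod_cast n.lt_two_pow_self.le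
    have hy' : |y| ^ (n - 1) ≤ R ^ n :=
      (pow_le_pow_left₀ (abs_nonneg y) hy.le _).trans (pow_le_pow_right₀ hR (n.sub_le 1))
    rw [norm_mul, norm_mul, norm_pow, Real.norm_natCast, Real.norm_eq_abs, Real.norm_eq_abs,
      mul_pow]
    gcongr
  have hsum' : Summable fun n => a n * (n * u ^ (n - 1)) :=
    .of_norm_bounded (ha (2 * R)) fun n => hbound n u hu
  have h := hasDerivAt_tsum_of_isPreconnected (ha (2 * R)) Metric.isOpen_ball
    (convex_ball 0 R).isPreconnected (fun n y _ => (hasDerivAt_pow n y).const_mul (a n)) hbound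
    hu (.of_norm (by simpa only [norm_mul, norm_pow, Real.norm_eq_abs] using ha |u|)) hu
  rw [hsum'.tsum_eq_zero_add] at h
  simpa [mul_assoc] using h

theorem intervalIntegrable_rpow_mul_sub_rpow {a b t : ℝ} (ha : 0 < a) (hb : 0 < b) (ht : 0 < t) :
    IntervalIntegrable (fun s => s ^ (a - 1) * (t - s) ^ (b - 1)) volume 0 t := by
  have hleft :
      IntervalIntegrable (fun s => s ^ (a - 1) * (t - s) ^ (b - 1)) volume 0 (t / 2) := by
    refine (intervalIntegral.intervalIntegrable_rpow' (by linarith)).mul_continuousOn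
      (ContinuousOn.rpow_const (by fun_prop) fun s hs => Or.inl ?_)
    rw [uIcc_of_le (by linarith)] at hs
    linarith [hs.2]
  have hright :
      IntervalIntegrable (fun s => s ^ (a - 1) * (t - s) ^ (b - 1)) volume (t / 2) t := by
    have hsing : IntervalIntegrable (fun s => (t - s) ^ (b - 1)) volume (t / 2) t := by
      simpa [show t - t / 2 = t / 2 by ring] using
        ((intervalIntegral.intervalIntegrable_rpow' (r := b - 1) (a := 0) (b := t / 2)
          (by linarith)).comp_sub_left t).symm
    refine hsing.continuousOn_mul (ContinuousOn.rpow_const (by fun_prop) fun s hs => Or.inl ?_)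
    rw [uIcc_of_le (by linarith)] at hs
    linarith [hs.1]
  exact hleft.trans hright

theorem integral_rpow_mul_sub_rpow {a b t : ℝ} (ha : 0 < a) (hb : 0 < b) (ht : 0 < t) :
    ∫ s in 0..t, s ^ (a - 1) * (t - s) ^ (b - 1) =
      Gamma a * Gamma b / Gamma (a + b) * t ^ (a + b - 1) := by
  have hΓ : (Gamma (a + b) : ℂ) ≠ 0 := by exact_mod_cast (Gamma_pos_of_pos (by positivity)).ne'
  have hbeta : Complex.betaIntegral a b = ((Gamma a * Gamma b / Gamma (a + b) : ℝ) : ℂ) := by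
    have h := Complex.Gamma_mul_Gamma_eq_betaIntegral (s := a) (t := b) (by simpa) (by simpa)
    rw [← Complex.ofReal_add, Complex.Gamma_ofReal, Complex.Gamma_ofReal,
      Complex.Gamma_ofReal] at h
    push_cast
    rw [h, mul_div_cancel_left₀ _ hΓ]
  have key : ((∫ s in 0..t, s ^ (a - 1) * (t - s) ^ (b - 1) : ℝ) : ℂ) =
      ((t ^ (a + b - 1) : ℝ) : ℂ) * Complex.betaIntegral a b := by
    rw [← intervalIntegral.integral_ofReal, Complex.ofReal_cpow ht.le, Complex.ofReal_sub,
      Complex.ofReal_add, Complex.ofReal_one, ← Complex.betaIntegral_scaled _ _ ht]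
    refine intervalIntegral.integral_congr fun s hs => ?_
    rw [uIcc_of_le ht.le] at hs
    rw [Complex.ofReal_mul, Complex.ofReal_cpow hs.1, Complex.ofReal_cpow (sub_nonneg.2 hs.2)]
    push_cast
    rfl
  rw [hbeta, mul_comm] at key
  exact_mod_cast key

theorem integral_tsum_mul_of_nonneg {α : Type*} [MeasurableSpace α] {μ : Measure α}
    {c : ℕ → ℝ} {g : ℕ → α → ℝ} (hg : ∀ n, Integrable (g n) μ) (hg0 : ∀ n, 0 ≤ᵐ[μ] g n)
    (hsum : Summable fun n => |c n| * ∫ x, g n x ∂μ) :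
    ∫ x, ∑' n, c n * g n x ∂μ = ∑' n, c n * ∫ x, g n x ∂μ := by
  have hnorm : ∀ n, ∫ x, ‖c n * g n x‖ ∂μ = |c n| * ∫ x, g n x ∂μ := fun n => by
    rw [← integral_const_mul]
    refine integral_congr_ae ((hg0 n).mono fun x (hx : 0 ≤ g n x) => ?_)
    dsimp only
    rw [norm_mul, Real.norm_eq_abs, Real.norm_of_nonneg hx]
  simp_rw [← integral_const_mul]
  exact (integral_tsum_of_summable_integral_norm (fun n => (hg n).const_mul (c n))
    (by simpa only [hnorm] using hsum)).symm

noncomputable def mittagLefflerE (γ z : ℝ) : ℝ :=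
  ∑' n : ℕ, z ^ n / Gamma (γ * n + 1)

theorem mittagLefflerE_zero (γ : ℝ) : mittagLefflerE γ 0 = 1 := by
  rw [mittagLefflerE, tsum_eq_single 0 fun n hn => by simp [hn]]
  simp

theorem hasDerivAt_mittagLefflerE {γ : ℝ} (hγ0 : 0 < γ) (hγ1 : γ < 1) (z : ℝ) :
    HasDerivAt (mittagLefflerE γ) (∑' n : ℕ, (n + 1) * z ^ n / Gamma (γ * (n + 1) + 1)) z := by
  have hΓ : ∀ n : ℕ, 0 < Gamma (γ * n + 1) := fun n => Gamma_pos_of_pos (by positivity)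
  have h := hasDerivAt_tsum_mul_pow (a := fun n : ℕ => (Gamma (γ * n + 1))⁻¹) (fun r => by
    simpa only [abs_inv, abs_of_pos (hΓ _), inv_mul_eq_div] using
      summable_pow_div_Gamma_mul_add_one hγ0 hγ1 r) z
  convert h using 1
  · ext w
    exact tsum_congr fun n => div_eq_inv_mul _ _
  · refine tsum_congr fun n => ?_
    push_cast
    ring

theorem hasDerivAt_mittagLefflerE_mul_rpow {γ : ℝ} (hγ0 : 0 < γ) (hγ1 : γ < 1) (c : ℝ)
    {s : ℝ} (hs : 0 < s) :
    HasDerivAt (fun t => mittagLefflerE γ (c * t ^ γ))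
      (∑' n : ℕ, c ^ (n + 1) / Gamma (γ * (n + 1)) * s ^ (γ * (n + 1) - 1)) s := by
  have h := (hasDerivAt_mittagLefflerE hγ0 hγ1 (c * s ^ γ)).comp s
    ((hasDerivAt_rpow_const (p := γ) (Or.inl hs.ne')).const_mul c)
  refine h.congr_deriv ?_
  rw [← tsum_mul_right]
  refine tsum_congr fun n => ?_
  have hn : γ * (n + 1) ≠ 0 := by positivity
  have hpow : s ^ (γ * (n + 1) - 1) = (s ^ γ) ^ n * s ^ (γ - 1) := by
    rw [← rpow_natCast, ← rpow_mul hs.le, ← rpow_add hs]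
    ring_nf
  rw [Gamma_add_one hn, hpow]
  field_simp
  ring

theorem integral_rpow_mul_sub_rpow_neg {γ t : ℝ} (hγ0 : 0 < γ) (hγ1 : γ < 1) (ht : 0 < t)
    (n : ℕ) : ∫ s in 0..t, s ^ (γ * (n + 1) - 1) * (t - s) ^ (-γ) =
      Gamma (γ * (n + 1)) * Gamma (1 - γ) / Gamma (γ * n + 1) * (t ^ γ) ^ n := by
  have h := integral_rpow_mul_sub_rpow (a := γ * (n + 1)) (b := 1 - γ) (by positivity)
    (sub_pos.2 hγ1) ht
  rw [show 1 - γ - 1 = -γ by ring, show γ * (n + 1) + (1 - γ) = γ * n + 1 by ring,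
    show γ * n + 1 - 1 = γ * n by ring] at h
  rw [h, ← rpow_natCast, ← rpow_mul ht.le]

theorem caputo_mittagLefflerE_mul_rpow {γ : ℝ} (hγ0 : 0 < γ) (hγ1 : γ < 1) (c : ℝ) {t : ℝ}
    (ht : 0 < t) :
    caputo γ (fun t => mittagLefflerE γ (c * t ^ γ)) t = c * mittagLefflerE γ (c * t ^ γ) := by
  set g : ℕ → ℝ → ℝ := fun n s => s ^ (γ * (n + 1) - 1) * (t - s) ^ (-γ)
  have hΓ : 0 < Gamma (1 - γ) := Gamma_pos_of_pos (sub_pos.2 hγ1)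
  have hintegrand : ∀ s ∈ Ioc 0 t,
      (t - s) ^ (-γ) * deriv (fun t => mittagLefflerE γ (c * t ^ γ)) s
        = ∑' n : ℕ, c ^ (n + 1) / Gamma (γ * (n + 1)) * g n s := fun s hs => by
    rw [(hasDerivAt_mittagLefflerE_mul_rpow hγ0 hγ1 c hs.1).deriv, ← tsum_mul_left]
    exact tsum_congr fun n => by ring
  -- for every `b`, so that `b = |c|` also evaluates the series of absolute values
  have hterm : ∀ (b : ℝ) (n : ℕ), b ^ (n + 1) / Gamma (γ * (n + 1)) * ∫ s in Ioc 0 t, g n s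
      = Gamma (1 - γ) * (b * ((b * t ^ γ) ^ n / Gamma (γ * n + 1))) := fun b n => by
    rw [← intervalIntegral.integral_of_le ht.le, integral_rpow_mul_sub_rpow_neg hγ0 hγ1 ht,
      mul_pow]
    field_simp [(Gamma_pos_of_pos (by positivity : 0 < γ * (n + 1))).ne']
    ring
  have hg : ∀ n, Integrable (g n) (volume.restrict (Ioc 0 t)) := fun n => by
    have h := intervalIntegrable_rpow_mul_sub_rpow (a := γ * (n + 1)) (b := 1 - γ)
      (by positivity) (sub_pos.2 hγ1) ht
    rw [show 1 - γ - 1 = -γ by ring] at h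
    exact (intervalIntegrable_iff_integrableOn_Ioc_of_le ht.le).1 h
  have hg0 : ∀ n, 0 ≤ᵐ[volume.restrict (Ioc 0 t)] g n := fun n =>
    (ae_restrict_mem measurableSet_Ioc).mono fun s hs =>
      mul_nonneg (rpow_nonneg hs.1.le _) (rpow_nonneg (sub_nonneg.2 hs.2) _)
  have hsum :
      Summable fun n : ℕ => |c ^ (n + 1) / Gamma (γ * (n + 1))| * ∫ s in Ioc 0 t, g n s := by
    have hcoef : ∀ n : ℕ,
        |c ^ (n + 1) / Gamma (γ * (n + 1))| = |c| ^ (n + 1) / Gamma (γ * (n + 1)) := fun n => by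
      rw [abs_div, abs_pow, abs_of_pos (Gamma_pos_of_pos (by positivity))]
    simp_rw [hcoef, hterm]
    exact ((summable_pow_div_Gamma_mul_add_one hγ0 hγ1 _).mul_left _).mul_left _
  rw [caputo, intervalIntegral.integral_of_le ht.le, setIntegral_congr_fun measurableSet_Ioc
    hintegrand, integral_tsum_mul_of_nonneg hg hg0 hsum]
  simp_rw [hterm]
  rw [tsum_mul_left, tsum_mul_left, inv_mul_cancel_left₀ hΓ.ne']
  rfl

theorem mittagLeffler_solves_caputo_ode_general (γ φ : ℝ) (hγ : γ ∈ Set.Ioo (0:ℝ) 1)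
    (y : ℝ → ℝ) (hy : y = fun t => mittagLeffler γ φ t) :
    y 0 = 1 ∧ ∀ t > (0:ℝ), caputo γ y t = -φ * y t := by
  subst hy
  refine ⟨?_, fun t ht => caputo_mittagLefflerE_mul_rpow hγ.1 hγ.2 (-φ) ht⟩
  change mittagLefflerE γ (-φ * 0 ^ γ) = 1
  rw [zero_rpow hγ.1.ne', mul_zero, mittagLefflerE_zero]

theorem mittagLeffler_solves_caputo_ode (γ φ : ℝ) (hγ : γ ∈ Set.Ioo (0:ℝ) 1)
    (hφ : 0 < φ) (y : ℝ → ℝ) (hy : y = fun t => mittagLeffler γ φ t) :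
    y 0 = 1 ∧ ∀ t > (0:ℝ), caputo γ y t = -φ * y t :=
  mittagLeffler_solves_caputo_ode_general γ φ hγ y hy
end
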